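/- arXiv:1611.05999 — 2 statements merged into one kernel-verified Lean document; each statement's English description precedes it below -/
import Mathlib

section
/- Let a > 0, let σ : ℝ² × [0,∞) → ℝ satisfy |σ(x,t)| ≤ C₀ for all x, t, and let R > 0. Then sup_{y ∈ ℝ²} ∫₀^R ∬_{\{x ∈ ℝ² : |x| ≤ R\}} |G(x,y,t)| dx dt < ∞; that is, the L¹-norm of G(·,y,·) over the compact set B(0,R) × [0,R] is bounded uniformly in y. -/
open MeasureTheory Real ENNReal

/-- The planar wave kernel. -/
noncomputable def waveKernel (a : ℝ) (σ : EuclideanSpace ℝ (Fin 2) → ℝ → ℝ)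
    (x y : EuclideanSpace ℝ (Fin 2)) (t : ℝ) : ℝ :=
  if dist x y < a * t then
    (1 / (2 * Real.pi * a)) *
      ∫ τ in (0 : ℝ)..(t - dist x y / a),
        σ y τ / Real.sqrt (a ^ 2 * (t - τ) ^ 2 - (dist x y) ^ 2)
  else 0

/-! For `x ≠ y` put `d = |x - y|` and `s = t - d / a`. The radicand `a²(t - τ)² - d²` is at least
`2 a d (s - τ)`, so the Abel-type integral in `τ` gives `|G(x,y,t)| ≤ K √t · d^(-1/2)` with `K`
depending only on `C₀` and `a`. The function `|z|^(-1/2)` is locally integrable on the plane and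
at most `1` off the unit ball, so its translates have integrals over `B(0,R)` bounded uniformly
in the translation `y`. -/

section NormRpow

open Metric

variable {E : Type*} [NormedAddCommGroup E] {α : ℝ}

theorem ofReal_norm_rpow_neg_le_one_add_indicator (hα₀ : 0 ≤ α) (z : E) :
    ENNReal.ofReal (‖z‖ ^ (-α)) ≤
      1 + (closedBall (0 : E) 1).indicator (fun z => ENNReal.ofReal (‖z‖ ^ (-α))) z := by
  by_cases hz : z ∈ closedBall (0 : E) 1
  · rw [Set.indicator_of_mem hz]
    exact le_add_self
  · have hz1 : 1 ≤ ‖z‖ := by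
      rw [mem_closedBall, dist_zero_right, not_le] at hz
      exact hz.le
    rw [Set.indicator_of_notMem hz, add_zero, ← ENNReal.ofReal_one]
    exact ENNReal.ofReal_le_ofReal (rpow_le_one_of_one_le_of_nonpos hz1 (neg_nonpos.2 hα₀))

variable [NormedSpace ℝ E] [FiniteDimensional ℝ E] [MeasurableSpace E] [BorelSpace E]
  {μ : Measure E} [μ.IsAddHaarMeasure]

theorem lintegral_closedBall_norm_rpow_neg_lt_top (hα₀ : 0 ≤ α)
    (hα : α < Module.finrank ℝ E) (r : ℝ) :
    ∫⁻ z in closedBall (0 : E) r, ENNReal.ofReal (‖z‖ ^ (-α)) ∂μ < ⊤ := by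
  have hdim : 1 ≤ Module.finrank ℝ E := by
    exact_mod_cast (show (0 : ℝ) < Module.finrank ℝ E by linarith)
  have hloc : LocallyIntegrable (fun z : E => ‖z‖ ^ (-α)) μ :=
    locallyIntegrable_of_norm_le_rpow (C := 1) hdim hα
      (Filter.Eventually.of_forall fun z => by
        rw [one_mul, norm_of_nonneg (by positivity)])
      (measurable_norm.pow_const _).aestronglyMeasurable
  exact (hloc.integrableOn_isCompact (isCompact_closedBall 0 r)).lintegral_lt_top

theorem iSup_lintegral_closedBall_norm_sub_rpow_neg_lt_top (hα₀ : 0 ≤ α)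
    (hα : α < Module.finrank ℝ E) (c : E) (r : ℝ) :
    ⨆ y : E, ∫⁻ x in closedBall c r, ENNReal.ofReal (‖x - y‖ ^ (-α)) ∂μ < ⊤ := by
  set g : E → ℝ≥0∞ := (closedBall (0 : E) 1).indicator fun z => ENNReal.ofReal (‖z‖ ^ (-α))
  have hbound : ∀ y : E, ∫⁻ x in closedBall c r, ENNReal.ofReal (‖x - y‖ ^ (-α)) ∂μ ≤
      μ (closedBall c r) + ∫⁻ z in closedBall (0 : E) 1, ENNReal.ofReal (‖z‖ ^ (-α)) ∂μ := by
    intro y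
    calc ∫⁻ x in closedBall c r, ENNReal.ofReal (‖x - y‖ ^ (-α)) ∂μ
        ≤ ∫⁻ x in closedBall c r, 1 + g (x - y) ∂μ :=
          lintegral_mono fun x => ofReal_norm_rpow_neg_le_one_add_indicator hα₀ (x - y)
      _ ≤ μ (closedBall c r) + ∫⁻ x, g (x - y) ∂μ := by
          rw [lintegral_add_left measurable_const, setLIntegral_const, one_mul]
          exact add_le_add_right (setLIntegral_le_lintegral _ _) _
      _ = μ (closedBall c r) + ∫⁻ z in closedBall (0 : E) 1, ENNReal.ofReal (‖z‖ ^ (-α)) ∂μ := by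
          rw [lintegral_sub_right_eq_self g y, lintegral_indicator measurableSet_closedBall]
  exact (iSup_le hbound).trans_lt (ENNReal.add_lt_top.2
    ⟨measure_closedBall_lt_top, lintegral_closedBall_norm_rpow_neg_lt_top hα₀ hα 1⟩)

end NormRpow

theorem intervalIntegrable_sub_rpow {r : ℝ} (hr : -1 < r) (s : ℝ) :
    IntervalIntegrable (fun τ => (s - τ) ^ r) volume 0 s := by
  simpa using (intervalIntegral.intervalIntegrable_rpow' (a := s) (b := 0) hr).comp_sub_left s

theorem integral_sub_rpow {r : ℝ} (hr : -1 < r) (s : ℝ) :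
    ∫ τ in (0 : ℝ)..s, (s - τ) ^ r = s ^ (r + 1) / (r + 1) := by
  rw [intervalIntegral.integral_comp_sub_left (fun τ => τ ^ r), sub_self, sub_zero,
    integral_rpow (Or.inl hr), zero_rpow (by linarith), sub_zero]

theorem abs_integral_div_sqrt_sq_sub_sq_le {f : ℝ → ℝ} {a d t C : ℝ} (ha : 0 < a) (hd : 0 < d)
    (hdt : d < a * t) (hf : ∀ τ ∈ Set.Ioc 0 (t - d / a), |f τ| ≤ C) :
    |∫ τ in (0 : ℝ)..(t - d / a), f τ / √(a ^ 2 * (t - τ) ^ 2 - d ^ 2)| ≤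
      C * √(2 * (t - d / a) / a) * d ^ (-(1 / 2 : ℝ)) := by
  set s := t - d / a with hs_def
  have hs : 0 < s := sub_pos.2 ((div_lt_iff₀' ha).2 hdt)
  have hC : 0 ≤ C := (abs_nonneg _).trans (hf s ⟨hs, le_rfl⟩)
  -- `a (t - τ) = a (s - τ) + d`, so the radicand is `a (s - τ) (a (s - τ) + 2 d)`.
  have hradicand : ∀ τ, 2 * a * d * (s - τ) ≤ a ^ 2 * (t - τ) ^ 2 - d ^ 2 := by
    intro τ
    have hat : a * (t - τ) = a * (s - τ) + d := by
      rw [hs_def]; field_simp; ring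
    have hsq : a ^ 2 * (t - τ) ^ 2 = (a * (s - τ) + d) ^ 2 := by rw [← hat]; ring
    nlinarith [sq_nonneg (a * (s - τ))]
  have hpointwise : ∀ᵐ τ ∂volume, τ ∈ Set.Ioc 0 s →
      ‖f τ / √(a ^ 2 * (t - τ) ^ 2 - d ^ 2)‖ ≤ C / √(2 * a * d) * (s - τ) ^ (-(1 / 2 : ℝ)) := by
    filter_upwards [Measure.ae_ne volume s] with τ hτs hτ
    have hsτ : 0 < s - τ := sub_pos.2 (lt_of_le_of_ne hτ.2 hτs)
    rw [norm_div, norm_of_nonneg (sqrt_nonneg _), rpow_neg hsτ.le, ← sqrt_eq_rpow,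
      ← div_eq_mul_inv, div_div, ← sqrt_mul (by positivity)]
    exact div_le_div₀ hC (hf τ hτ) (sqrt_pos.2 (by positivity)) (sqrt_le_sqrt (hradicand τ))
  have hhalf : (-1 : ℝ) < -(1 / 2) := by norm_num
  calc |∫ τ in (0 : ℝ)..s, f τ / √(a ^ 2 * (t - τ) ^ 2 - d ^ 2)|
      ≤ ∫ τ in (0 : ℝ)..s, C / √(2 * a * d) * (s - τ) ^ (-(1 / 2 : ℝ)) :=
        intervalIntegral.norm_integral_le_of_norm_le hs.le hpointwise
          ((intervalIntegrable_sub_rpow hhalf s).const_mul _)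
    _ = C / √(2 * a * d) * (2 * √s) := by
        rw [intervalIntegral.integral_const_mul, integral_sub_rpow hhalf]
        congr 1
        rw [sqrt_eq_rpow]
        norm_num
        ring
    _ = C * √(2 * s / a) * d ^ (-(1 / 2 : ℝ)) := by
        rw [rpow_neg hd.le, ← sqrt_eq_rpow, sqrt_div' _ ha.le, sqrt_mul (by positivity),
          sqrt_mul (by positivity), sqrt_mul (by positivity)]
        field_simp
        rw [sq_sqrt zero_le_two]

theorem abs_waveKernel_le {a : ℝ} (ha : 0 < a) {σ : EuclideanSpace ℝ (Fin 2) → ℝ → ℝ} {C : ℝ}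
    {x y : EuclideanSpace ℝ (Fin 2)} (hσ : ∀ τ, 0 ≤ τ → |σ y τ| ≤ C) (hxy : x ≠ y) (t : ℝ) :
    |waveKernel a σ x y t| ≤ C / (2 * π * a) * √(2 * t / a) * dist x y ^ (-(1 / 2 : ℝ)) := by
  have hC : 0 ≤ C := (abs_nonneg _).trans (hσ 0 le_rfl)
  have hd : 0 < dist x y := dist_pos.2 hxy
  unfold waveKernel
  split_ifs with hdt
  · rw [abs_mul, abs_of_pos (by positivity)]
    calc 1 / (2 * π * a) * |∫ τ in (0 : ℝ)..(t - dist x y / a),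
          σ y τ / √(a ^ 2 * (t - τ) ^ 2 - dist x y ^ 2)|
        ≤ 1 / (2 * π * a) * (C * √(2 * (t - dist x y / a) / a) * dist x y ^ (-(1 / 2 : ℝ))) := by
          gcongr
          exact abs_integral_div_sqrt_sq_sub_sq_le ha hd hdt fun τ hτ => hσ τ hτ.1.le
      _ ≤ 1 / (2 * π * a) * (C * √(2 * t / a) * dist x y ^ (-(1 / 2 : ℝ))) := by
          gcongr
          linarith [div_nonneg hd.le ha.le]
      _ = C / (2 * π * a) * √(2 * t / a) * dist x y ^ (-(1 / 2 : ℝ)) := by ring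
  · rw [abs_zero]
    positivity

theorem setLIntegral_abs_waveKernel_le {a : ℝ} (ha : 0 < a)
    {σ : EuclideanSpace ℝ (Fin 2) → ℝ → ℝ} {C : ℝ} {y : EuclideanSpace ℝ (Fin 2)}
    (hσ : ∀ τ, 0 ≤ τ → |σ y τ| ≤ C) (s : Set (EuclideanSpace ℝ (Fin 2))) (t : ℝ) :
    ∫⁻ x in s, ENNReal.ofReal |waveKernel a σ x y t| ≤
      ENNReal.ofReal (C / (2 * π * a) * √(2 * t / a)) *
        ∫⁻ x in s, ENNReal.ofReal (‖x - y‖ ^ (-(1 / 2 : ℝ))) := by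
  have hC : 0 ≤ C := (abs_nonneg _).trans (hσ 0 le_rfl)
  rw [← lintegral_const_mul' _ _ ofReal_ne_top]
  refine lintegral_mono_ae (ae_restrict_of_ae ?_)
  filter_upwards [Measure.ae_ne volume y] with x hxy
  rw [← ENNReal.ofReal_mul (by positivity), ← dist_eq_norm]
  exact ENNReal.ofReal_le_ofReal (abs_waveKernel_le ha hσ hxy t)

theorem waveKernel_L1_bound_uniform_general
    (a : ℝ) (ha : 0 < a) (σ : EuclideanSpace ℝ (Fin 2) → ℝ → ℝ) (C₀ : ℝ)
    (hσ_bdd : ∀ x : EuclideanSpace ℝ (Fin 2), ∀ t : ℝ, 0 ≤ t → |σ x t| ≤ C₀)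
    (R : ℝ) :
    (⨆ y : EuclideanSpace ℝ (Fin 2),
      ∫⁻ t in Set.Ioc (0 : ℝ) R,
        ∫⁻ x in Metric.closedBall (0 : EuclideanSpace ℝ (Fin 2)) R,
          ENNReal.ofReal |waveKernel a σ x y t|) < ⊤ := by
  have hC₀ : 0 ≤ C₀ := (abs_nonneg _).trans (hσ_bdd 0 0 le_rfl)
  set K : ℝ≥0∞ := ENNReal.ofReal (C₀ / (2 * π * a) * √(2 * R / a))
  set M : ℝ≥0∞ := ⨆ y : EuclideanSpace ℝ (Fin 2),
    ∫⁻ x in Metric.closedBall 0 R, ENNReal.ofReal (‖x - y‖ ^ (-(1 / 2 : ℝ)))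
  have hM : M < ⊤ :=
    iSup_lintegral_closedBall_norm_sub_rpow_neg_lt_top (by norm_num) (by norm_num) 0 R
  have hslice : ∀ y, ∀ t ∈ Set.Ioc (0 : ℝ) R,
      ∫⁻ x in Metric.closedBall 0 R, ENNReal.ofReal |waveKernel a σ x y t| ≤ K * M := by
    intro y t ht
    refine (setLIntegral_abs_waveKernel_le ha (hσ_bdd y) _ t).trans ?_
    gcongr
    · exact ENNReal.ofReal_le_ofReal (by gcongr; exact ht.2)
    · exact le_iSup (fun y : EuclideanSpace ℝ (Fin 2) =>
        ∫⁻ x in Metric.closedBall 0 R, ENNReal.ofReal (‖x - y‖ ^ (-(1 / 2 : ℝ)))) y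
  calc _ ≤ ∫⁻ _ in Set.Ioc (0 : ℝ) R, K * M :=
        iSup_le fun y => setLIntegral_mono measurable_const (hslice y)
    _ = K * M * volume (Set.Ioc (0 : ℝ) R) := setLIntegral_const _ _
    _ < ⊤ := ENNReal.mul_lt_top (ENNReal.mul_lt_top ofReal_lt_top hM) measure_Ioc_lt_top

/-- The `L¹` norm of `G(·,y,·)` over `B(0,R) × [0,R]` is bounded uniformly in `y`. -/
theorem waveKernel_L1_bound_uniform
    (a : ℝ) (ha : 0 < a) (σ : EuclideanSpace ℝ (Fin 2) → ℝ → ℝ) (C₀ : ℝ)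
    (hσ_bdd : ∀ x : EuclideanSpace ℝ (Fin 2), ∀ t : ℝ, 0 ≤ t → |σ x t| ≤ C₀)
    (R : ℝ) (hR : 0 < R) :
    (⨆ y : EuclideanSpace ℝ (Fin 2),
      ∫⁻ t in Set.Ioc (0 : ℝ) R,
        ∫⁻ x in Metric.closedBall (0 : EuclideanSpace ℝ (Fin 2)) R,
          ENNReal.ofReal |waveKernel a σ x y t|) < ⊤ :=
  waveKernel_L1_bound_uniform_general a ha σ C₀ hσ_bdd R
end

section
/- Let a > 0, T > 0, and let σ : ℝ² × [0,∞) → ℝ satisfy |σ(x,t)| ≤ C₀ for all x, t, and the Hölder condition |σ(x,t) − σ(x,s)| ≤ |t−s|^γ for all x ∈ ℝ² and t,s ≥ 0, for some γ ∈ (0,1]. Then there is a constant C (depending only on a, C₀, γ, T) such that for all x, y ∈ ℝ² and 0 ≤ t₁ ≤ t₂ ≤ T with 0 < |x−y| < a t₁: |G(x,y,t₁) − G(x,y,t₂)| ≤ C ( (t₂ − t₁)^γ + √(t₂ − t₁) ) / √(|x−y|). -/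
open MeasureTheory Real

/-! Substituting `u = t - τ` writes `G(x,y,t)` as `(2πa)⁻¹ ∫_{r/a}^{t} σ(y,t-u) / √(a²u² - r²) du`
with `r = |x-y|`. Since `a²u² - r² - 2ra(u - r/a) = (au - r)²`, the weight is dominated by
`(2ra)^{-1/2} (u - r/a)^{-1/2}`, whose integral is explicit. Splitting `G(t₁) - G(t₂)` at `t₁`, the
part over `[r/a, t₁]` has integrand `|σ(y,t₁-u) - σ(y,t₂-u)| ≤ (t₂-t₁)^γ` and weight
integral at most `2√T/√(2ra)`, while the part over `[t₁, t₂]` has integrand bounded by `C₀` and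
weight integral `2(√(t₂-r/a) - √(t₁-r/a))/√(2ra) ≤ 2√(t₂-t₁)/√(2ra)`. -/

open Set

lemma HolderOnWith.of_dist_le {X Y : Type*} [PseudoMetricSpace X] [PseudoMetricSpace Y]
    {C r : NNReal} {f : X → Y} {s : Set X}
    (h : ∀ x ∈ s, ∀ y ∈ s, dist (f x) (f y) ≤ C * dist x y ^ (r : ℝ)) :
    HolderOnWith C r f s := fun x hx y hy => by
  rw [edist_dist, edist_dist, ENNReal.ofReal_rpow_of_nonneg dist_nonneg r.coe_nonneg,
    ← ENNReal.ofReal_coe_nnreal, ← ENNReal.ofReal_mul C.coe_nonneg]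
  exact ENNReal.ofReal_le_ofReal (h x hx y hy)

lemma Real.sqrt_sub_sqrt_le_sqrt_sub {x y : ℝ} (hy : 0 ≤ y) (hyx : y ≤ x) :
    √x - √y ≤ √(x - y) := by
  have h := Real.rpow_add_le_add_rpow (sub_nonneg.2 hyx) hy (p := 1 / 2) (by norm_num) (by norm_num)
  simp only [← Real.sqrt_eq_rpow, sub_add_cancel] at h
  linarith

lemma integral_sub_rpow_neg_half (b c d : ℝ) :
    ∫ u in c..d, (u - b) ^ (-(1 / 2) : ℝ) = 2 * √(d - b) - 2 * √(c - b) := by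
  rw [intervalIntegral.integral_comp_sub_right (fun v => v ^ (-(1 / 2) : ℝ)) b,
    integral_rpow (Or.inl (by norm_num)), Real.sqrt_eq_rpow, Real.sqrt_eq_rpow]
  norm_num
  ring

lemma intervalIntegrable_sub_rpow_neg_half (b c d : ℝ) :
    IntervalIntegrable (fun u => (u - b) ^ (-(1 / 2) : ℝ)) volume c d := by
  simpa using (intervalIntegral.intervalIntegrable_rpow' (r := (-(1 / 2) : ℝ)) (by norm_num)
    (a := c - b) (b := d - b)).comp_sub_right b

section SqrtWeight

variable {a r : ℝ}

lemma sqrt_mul_sqrt_sub_le_sqrt_sq_sub_sq (ha : 0 < a) (hr : 0 ≤ r) (u : ℝ) :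
    √(2 * r * a) * √(u - r / a) ≤ √(a ^ 2 * u ^ 2 - r ^ 2) := by
  rw [← Real.sqrt_mul (by positivity)]
  refine Real.sqrt_le_sqrt ?_
  have h : 2 * r * a * (u - r / a) = 2 * r * a * u - 2 * r ^ 2 := by field_simp
  nlinarith [sq_nonneg (a * u - r)]

lemma abs_div_sqrt_sq_sub_sq_le (ha : 0 < a) (hr : 0 < r) {u v M : ℝ} (hu : r / a < u)
    (hv : |v| ≤ M) :
    |v / √(a ^ 2 * u ^ 2 - r ^ 2)| ≤ M / √(2 * r * a) * (u - r / a) ^ (-(1 / 2) : ℝ) := by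
  have hpos : 0 < √(2 * r * a) * √(u - r / a) :=
    mul_pos (Real.sqrt_pos.2 (by positivity)) (Real.sqrt_pos.2 (sub_pos.2 hu))
  rw [Real.rpow_neg (sub_pos.2 hu).le, ← Real.sqrt_eq_rpow, ← div_eq_mul_inv, div_div,
    abs_div, abs_of_nonneg (Real.sqrt_nonneg _)]
  exact div_le_div₀ ((abs_nonneg v).trans hv) hv hpos
    (sqrt_mul_sqrt_sub_le_sqrt_sq_sub_sq ha hr.le u)

variable {c d M : ℝ} {g : ℝ → ℝ}

lemma intervalIntegrable_div_sqrt_sq_sub_sq (ha : 0 < a) (hr : 0 < r) (hc : r / a ≤ c)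
    (hcd : c ≤ d) (hg : ContinuousOn g (Icc c d)) (hgM : ∀ u ∈ Icc c d, |g u| ≤ M) :
    IntervalIntegrable (fun u => g u / √(a ^ 2 * u ^ 2 - r ^ 2)) volume c d := by
  rw [intervalIntegrable_iff_integrableOn_Ioc_of_le hcd]
  refine Integrable.mono' ((intervalIntegrable_iff_integrableOn_Ioc_of_le hcd).1
    ((intervalIntegrable_sub_rpow_neg_half (r / a) c d).const_mul (M / √(2 * r * a))))
    ((hg.mono Ioc_subset_Icc_self).aestronglyMeasurable measurableSet_Ioc |>.div₀
      (by fun_prop : Continuous fun u => √(a ^ 2 * u ^ 2 - r ^ 2)).aestronglyMeasurable) ?_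
  rw [ae_restrict_iff' measurableSet_Ioc]
  exact .of_forall fun u hu =>
    abs_div_sqrt_sq_sub_sq_le ha hr (hc.trans_lt hu.1) (hgM u (Ioc_subset_Icc_self hu))

lemma abs_integral_div_sqrt_sq_sub_sq_le_s9 (ha : 0 < a) (hr : 0 < r) (hc : r / a ≤ c)
    (hcd : c ≤ d) (hgM : ∀ u ∈ Ioc c d, |g u| ≤ M) :
    |∫ u in c..d, g u / √(a ^ 2 * u ^ 2 - r ^ 2)| ≤
      M / √(2 * r * a) * (2 * √(d - r / a) - 2 * √(c - r / a)) := by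
  rw [← integral_sub_rpow_neg_half, ← intervalIntegral.integral_const_mul]
  exact intervalIntegral.norm_integral_le_of_norm_le hcd
    (.of_forall fun u hu => (Real.norm_eq_abs _).trans_le <|
      abs_div_sqrt_sq_sub_sq_le ha hr (hc.trans_lt hu.1) (hgM u hu))
    ((intervalIntegrable_sub_rpow_neg_half _ c d).const_mul _)

end SqrtWeight

lemma intervalIntegral.integral_sub_integral_eq {f g : ℝ → ℝ} {μ : Measure ℝ} {b s t : ℝ}
    (hf : IntervalIntegrable f μ b s) (hg : IntervalIntegrable g μ b s)
    (hg' : IntervalIntegrable g μ s t) :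
    ∫ u in b..s, f u ∂μ - ∫ u in b..t, g u ∂μ =
      ∫ u in b..s, (f u - g u) ∂μ - ∫ u in s..t, g u ∂μ := by
  rw [intervalIntegral.integral_sub hf hg,
    ← intervalIntegral.integral_add_adjacent_intervals hg hg']
  ring

lemma waveKernel_eq_integral (a : ℝ) (σ : EuclideanSpace ℝ (Fin 2) → ℝ → ℝ)
    (x y : EuclideanSpace ℝ (Fin 2)) {t : ℝ} (ht : dist x y < a * t) :
    waveKernel a σ x y t = 1 / (2 * π * a) *
      ∫ u in dist x y / a..t, σ y (t - u) / √(a ^ 2 * u ^ 2 - dist x y ^ 2) := by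
  have h := intervalIntegral.integral_comp_sub_left
    (fun τ => σ y τ / √(a ^ 2 * (t - τ) ^ 2 - dist x y ^ 2)) t (a := dist x y / a) (b := t)
  simp only [sub_sub_cancel, sub_self] at h
  rw [waveKernel, if_pos ht, h]

lemma abs_integral_time_shift_sub_le {a r γ C₀ t₁ t₂ : ℝ} {f : ℝ → ℝ} (ha : 0 < a) (hr : 0 < r)
    (hf : ContinuousOn f (Ici 0)) (hf_bdd : ∀ s, 0 ≤ s → |f s| ≤ C₀)
    (hf_hold : ∀ s s', 0 ≤ s → 0 ≤ s' → |f s - f s'| ≤ |s - s'| ^ γ)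
    (ht₁ : r / a ≤ t₁) (h12 : t₁ ≤ t₂) :
    |(∫ u in r / a..t₁, f (t₁ - u) / √(a ^ 2 * u ^ 2 - r ^ 2)) -
        ∫ u in r / a..t₂, f (t₂ - u) / √(a ^ 2 * u ^ 2 - r ^ 2)| ≤
      ((t₂ - t₁) ^ γ * (2 * √(t₁ - r / a)) + C₀ * (2 * √(t₂ - t₁))) / √(2 * r * a) := by
  have hshift : ∀ {s c d}, d ≤ s → ContinuousOn (fun u => f (s - u)) (Icc c d) := fun hds =>
    hf.comp (by fun_prop) fun u hu => sub_nonneg.2 (hu.2.trans hds)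
  have hint : ∀ {s c d}, r / a ≤ c → c ≤ d → d ≤ s →
      IntervalIntegrable (fun u => f (s - u) / √(a ^ 2 * u ^ 2 - r ^ 2)) volume c d :=
    fun hc hcd hds => intervalIntegrable_div_sqrt_sq_sub_sq ha hr hc hcd (hshift hds)
      fun u hu => hf_bdd _ (sub_nonneg.2 (hu.2.trans hds))
  have hhold : |∫ u in r / a..t₁, (f (t₁ - u) / √(a ^ 2 * u ^ 2 - r ^ 2) -
      f (t₂ - u) / √(a ^ 2 * u ^ 2 - r ^ 2))| ≤
        (t₂ - t₁) ^ γ / √(2 * r * a) * (2 * √(t₁ - r / a)) := by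
    simp_rw [← sub_div]
    refine (abs_integral_div_sqrt_sq_sub_sq_le_s9 (M := (t₂ - t₁) ^ γ) ha hr le_rfl ht₁
      fun u hu => ?_).trans_eq (by rw [sub_self, Real.sqrt_zero, mul_zero, sub_zero])
    have h := hf_hold (t₁ - u) (t₂ - u) (by linarith [hu.2]) (by linarith [hu.2])
    rwa [sub_sub_sub_cancel_right, abs_sub_comm t₁, abs_of_nonneg (sub_nonneg.2 h12)] at h
  have hbdd : |∫ u in t₁..t₂, f (t₂ - u) / √(a ^ 2 * u ^ 2 - r ^ 2)| ≤
      C₀ / √(2 * r * a) * (2 * √(t₂ - t₁)) := by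
    refine (abs_integral_div_sqrt_sq_sub_sq_le_s9 ha hr ht₁ h12 fun u hu =>
      hf_bdd _ (sub_nonneg.2 hu.2)).trans ?_
    have hC₀ : 0 ≤ C₀ := (abs_nonneg _).trans (hf_bdd 0 le_rfl)
    have h := Real.sqrt_sub_sqrt_le_sqrt_sub (sub_nonneg.2 ht₁) (sub_le_sub_right h12 (r / a))
    rw [sub_sub_sub_cancel_right] at h
    gcongr
    linarith
  rw [intervalIntegral.integral_sub_integral_eq (hint le_rfl ht₁ le_rfl) (hint le_rfl ht₁ h12)
    (hint ht₁ h12 le_rfl)]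
  refine (abs_sub _ _).trans ((add_le_add hhold hbdd).trans_eq ?_)
  ring

lemma abs_waveKernel_sub_le {a γ C₀ t₁ t₂ : ℝ} {σ : EuclideanSpace ℝ (Fin 2) → ℝ → ℝ}
    {x y : EuclideanSpace ℝ (Fin 2)} (ha : 0 < a) (hσ : ContinuousOn (σ y) (Ici 0))
    (hσ_bdd : ∀ t, 0 ≤ t → |σ y t| ≤ C₀)
    (hσ_hold : ∀ t s, 0 ≤ t → 0 ≤ s → |σ y t - σ y s| ≤ |t - s| ^ γ)
    (hr : 0 < dist x y) (hrt₁ : dist x y < a * t₁) (h12 : t₁ ≤ t₂) :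
    |waveKernel a σ x y t₁ - waveKernel a σ x y t₂| ≤
      ((t₂ - t₁) ^ γ * √(t₁ - dist x y / a) + C₀ * √(t₂ - t₁)) /
        (π * a * √(2 * a) * √(dist x y)) := by
  have ht₁ : dist x y / a ≤ t₁ := (div_le_iff₀' ha).2 hrt₁.le
  rw [waveKernel_eq_integral a σ x y hrt₁,
    waveKernel_eq_integral a σ x y (hrt₁.trans_le (by gcongr)), ← mul_sub, abs_mul,
    abs_of_pos (by positivity)]
  refine (mul_le_mul_of_nonneg_left (abs_integral_time_shift_sub_le ha hr hσ hσ_bdd hσ_hold ht₁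
    h12) (by positivity)).trans_eq ?_
  rw [show 2 * dist x y * a = 2 * a * dist x y by ring, Real.sqrt_mul (by positivity)]
  field_simp

theorem waveKernel_time_increment_bound_inside_general
    (a T : ℝ) (ha : 0 < a)
    (σ : EuclideanSpace ℝ (Fin 2) → ℝ → ℝ) (C₀ : ℝ) (γ : ℝ) (hγ : γ ∈ Set.Ioc (0 : ℝ) 1)
    (hσ_bdd : ∀ x : EuclideanSpace ℝ (Fin 2), ∀ t : ℝ, 0 ≤ t → |σ x t| ≤ C₀)
    (hσ_hold : ∀ x : EuclideanSpace ℝ (Fin 2), ∀ t s : ℝ, 0 ≤ t → 0 ≤ s →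
      |σ x t - σ x s| ≤ |t - s| ^ γ) :
    ∃ C : ℝ, 0 < C ∧
      ∀ (x y : EuclideanSpace ℝ (Fin 2)) (t₁ t₂ : ℝ),
        0 ≤ t₁ → t₁ ≤ t₂ → t₂ ≤ T → 0 < dist x y → dist x y < a * t₁ →
        |waveKernel a σ x y t₁ - waveKernel a σ x y t₂| ≤
          C * ((t₂ - t₁) ^ γ + Real.sqrt (t₂ - t₁)) / Real.sqrt (dist x y) := by
  have hC₀ : 0 ≤ C₀ := (abs_nonneg _).trans (hσ_bdd 0 0 le_rfl)
  refine ⟨(√T + C₀ + 1) / (π * a * √(2 * a)), by positivity, ?_⟩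
  intro x y t₁ t₂ _ h12 h2T hr hrt₁
  have hholder : HolderOnWith 1 ⟨γ, hγ.1.le⟩ (σ y) (Ici 0) :=
    .of_dist_le fun t ht s hs => by
      rw [Real.dist_eq, Real.dist_eq, NNReal.coe_one, one_mul]
      exact hσ_hold y t s ht hs
  have hsqrt : √(t₁ - dist x y / a) ≤ √T := Real.sqrt_le_sqrt (by linarith [div_pos hr ha])
  have hX : 0 ≤ (t₂ - t₁) ^ γ := Real.rpow_nonneg (sub_nonneg.2 h12) γ
  calc _ ≤ _ := abs_waveKernel_sub_le ha (hholder.continuousOn hγ.1) (hσ_bdd y) (hσ_hold y) hr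
        hrt₁ h12
    _ ≤ (√T + C₀ + 1) * ((t₂ - t₁) ^ γ + √(t₂ - t₁)) / (π * a * √(2 * a) * √(dist x y)) := by
        gcongr
        nlinarith [Real.sqrt_nonneg T, Real.sqrt_nonneg (t₂ - t₁)]
    _ = _ := by field_simp

/-- Time increment bound for the planar wave kernel in the regime `0 < |x-y| < a t₁`:
`|G(x,y,t₁) - G(x,y,t₂)| ≤ C ((t₂-t₁)^γ + √(t₂-t₁))/√|x-y|`. -/
theorem waveKernel_time_increment_bound_inside
    (a T : ℝ) (ha : 0 < a) (hT : 0 < T)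
    (σ : EuclideanSpace ℝ (Fin 2) → ℝ → ℝ) (C₀ : ℝ) (γ : ℝ) (hγ : γ ∈ Set.Ioc (0 : ℝ) 1)
    (hσ_bdd : ∀ x : EuclideanSpace ℝ (Fin 2), ∀ t : ℝ, 0 ≤ t → |σ x t| ≤ C₀)
    (hσ_hold : ∀ x : EuclideanSpace ℝ (Fin 2), ∀ t s : ℝ, 0 ≤ t → 0 ≤ s →
      |σ x t - σ x s| ≤ |t - s| ^ γ) :
    ∃ C : ℝ, 0 < C ∧
      ∀ (x y : EuclideanSpace ℝ (Fin 2)) (t₁ t₂ : ℝ),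
        0 ≤ t₁ → t₁ ≤ t₂ → t₂ ≤ T → 0 < dist x y → dist x y < a * t₁ →
        |waveKernel a σ x y t₁ - waveKernel a σ x y t₂| ≤
          C * ((t₂ - t₁) ^ γ + Real.sqrt (t₂ - t₁)) / Real.sqrt (dist x y) :=
  waveKernel_time_increment_bound_inside_general a T ha σ C₀ γ hγ hσ_bdd hσ_hold
end
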